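/- Let x ∈ ℝ² ∖ {0}, t ∈ ℝ, b ∈ ℝ², and λ, λ⊥ ∈ ℝ. Let H : ℝ × ℝ² → ℝ² be C¹ in the time variable and C² in the space variable in a neighborhood of (t,x), and let G : ℝ² → ℝ be C². Set x̂ := x/‖x‖ and let x̂⊥ be the rotation of x̂ by 90°. Assume that the spatial Jacobian of H at (t,x) equals λ P_x + λ⊥ (I − P_x), where P_x is the orthogonal projection onto span{x}, and that H satisfies ∂_t H(t,x) = (1/2) Δ_x H(t,x) + (D_x H(t,x)) b (componentwise, with Δ_x the spatial Laplacian). Then (1/2) Δ_x (G∘H)(t,x) + b · ∇_x (G∘H)(t,x) − ∂_t (G∘H)(t,x) = (1/2) [ λ² ⟨x̂, Hess G(z) x̂⟩ + (λ⊥)² ⟨x̂⊥, Hess G(z) x̂⊥⟩ ] evaluated at z = H(t,x), where Hess G(z) is the Hessian of G at z. -/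

import Mathlib

/-!
Both sides are computed by the chain rule. To second order,
`Δ(G ∘ H) = DG (ΔH) + ∑ᵢ D²G (J eᵢ, J eᵢ)` with `J = D_x H`, and `∂ₜ(G ∘ H) = DG (∂ₜ H)`, so the
heat-type equation for `H` cancels every first-order term. What remains is the trace of the
bilinear form `D²G (J ·, J ·)`, which may be computed in any orthonormal basis; in the basis
`x̂, x̂⊥` the Jacobian is diagonal with entries `λ, λ⊥`.
-/

noncomputable section

/-- The plane `ℝ²`. -/
abbrev E2 := EuclideanSpace ℝ (Fin 2)

/-- The orthogonal projection of `ℝ²` onto the line spanned by `x`,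
`P_x v = (⟨x,v⟩/‖x‖²) • x`, as a continuous linear map. -/
def projLine (x : E2) : E2 →L[ℝ] E2 :=
  (‖x‖ ^ 2 : ℝ)⁻¹ • ((innerSL ℝ x).smulRight x)

/-- The spatial Laplacian, i.e. the sum of the two pure second partial derivatives
(componentwise for vector-valued maps). -/
def lap {F : Type*} [NormedAddCommGroup F] [NormedSpace ℝ F] (f : E2 → F) (x : E2) : F :=
  ∑ i : Fin 2,
    fderiv ℝ (fun y : E2 => fderiv ℝ f y (EuclideanSpace.single i 1)) x
      (EuclideanSpace.single i 1)

/-- The second directional derivative `⟨v, Hess G(z) v⟩` of a scalar function `G` at `z`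
in direction `v`. -/
def hessQuad (G : E2 → ℝ) (z v : E2) : ℝ :=
  fderiv ℝ (fun w : E2 => fderiv ℝ G w v) z v

/-- The unit vector `x̂ = x/‖x‖`. -/
def xhat (x : E2) : E2 := ‖x‖⁻¹ • x

/-- The rotation of `x̂` by 90°. -/
def xhatPerp (x : E2) : E2 :=
  EuclideanSpace.single 0 (-(xhat x 1)) + EuclideanSpace.single 1 (xhat x 0)


open scoped Topology InnerProductSpace

section SecondDerivative

variable {E F W : Type*} [NormedAddCommGroup E] [NormedSpace ℝ E]
  [NormedAddCommGroup F] [NormedSpace ℝ F] [NormedAddCommGroup W] [NormedSpace ℝ W]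

theorem ContDiffAt.differentiableAt_fderiv {f : E → F} {x : E} (hf : ContDiffAt ℝ 2 f x) :
    DifferentiableAt ℝ (fderiv ℝ f) x :=
  (hf.fderiv_right (m := 1) (by norm_num)).differentiableAt one_ne_zero

theorem fderiv_fderiv_apply_const {f : E → F} {x : E} (hf : DifferentiableAt ℝ (fderiv ℝ f) x)
    (v w : E) : fderiv ℝ (fun y => fderiv ℝ f y v) x w = fderiv ℝ (fderiv ℝ f) x w v := by
  rw [(hf.hasFDerivAt.clm_apply (hasFDerivAt_const v x)).fderiv]
  simp

theorem fderiv_fderiv_comp_apply {g : F → W} {f : E → F} {x : E}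
    (hg : ContDiffAt ℝ 2 g (f x)) (hf : ContDiffAt ℝ 2 f x) (v w : E) :
    fderiv ℝ (fderiv ℝ (g ∘ f)) x v w
      = fderiv ℝ g (f x) (fderiv ℝ (fderiv ℝ f) x v w)
        + fderiv ℝ (fderiv ℝ g) (f x) (fderiv ℝ f x v) (fderiv ℝ f x w) := by
  have hchain : fderiv ℝ (g ∘ f) =ᶠ[𝓝 x] fun y => (fderiv ℝ g (f y)).comp (fderiv ℝ f y) := by
    filter_upwards [hf.eventually (by simp),
      hf.continuousAt.eventually (hg.eventually (by simp))] with y hfy hgy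
    exact fderiv_comp y (hgy.differentiableAt two_ne_zero) (hfy.differentiableAt two_ne_zero)
  have hDgf : HasFDerivAt (fun y => fderiv ℝ g (f y))
      ((fderiv ℝ (fderiv ℝ g) (f x)).comp (fderiv ℝ f x)) x :=
    hg.differentiableAt_fderiv.hasFDerivAt.comp x (hf.differentiableAt two_ne_zero).hasFDerivAt
  rw [hchain.fderiv_eq, (hDgf.clm_comp hf.differentiableAt_fderiv.hasFDerivAt).fderiv]
  simp

theorem lap_eq_sum_fderiv_fderiv {f : E2 → F} {x : E2} (hf : DifferentiableAt ℝ (fderiv ℝ f) x) :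
    lap f x = ∑ i : Fin 2,
      fderiv ℝ (fderiv ℝ f) x (EuclideanSpace.single i 1) (EuclideanSpace.single i 1) := by
  simp only [lap, fderiv_fderiv_apply_const hf]

theorem lap_comp {g : F → W} {f : E2 → F} {x : E2}
    (hg : ContDiffAt ℝ 2 g (f x)) (hf : ContDiffAt ℝ 2 f x) :
    lap (g ∘ f) x = fderiv ℝ g (f x) (lap f x)
      + ∑ i : Fin 2, fderiv ℝ (fderiv ℝ g) (f x)
          (fderiv ℝ f x (EuclideanSpace.single i 1))
          (fderiv ℝ f x (EuclideanSpace.single i 1)) := by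
  rw [lap_eq_sum_fderiv_fderiv (hg.comp x hf).differentiableAt_fderiv,
    lap_eq_sum_fderiv_fderiv hf.differentiableAt_fderiv, map_sum, ← Finset.sum_add_distrib]
  simp only [fderiv_fderiv_comp_apply hg hf]

end SecondDerivative

theorem OrthonormalBasis.sum_bilin_apply_self_of_orthonormal_pair {ι E : Type*} [Fintype ι]
    [NormedAddCommGroup E] [InnerProductSpace ℝ E] (e : OrthonormalBasis ι ℝ E)
    (B : E →L[ℝ] E →L[ℝ] ℝ) {A : E → E} {u w a c : E} (hu : ‖u‖ = 1) (hw : ‖w‖ = 1)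
    (huw : ⟪u, w⟫_ℝ = 0) (hA : ∀ v, A v = ⟪u, v⟫_ℝ • a + ⟪w, v⟫_ℝ • c) :
    ∑ i, B (A (e i)) (A (e i)) = B a a + B c c := by
  have parseval (y z : E) : ∑ i, ⟪y, e i⟫_ℝ * ⟪z, e i⟫_ℝ = ⟪y, z⟫_ℝ := by
    simpa only [real_inner_comm (e _) z] using e.sum_inner_mul_inner y z
  have expand (i : ι) : B (A (e i)) (A (e i))
      = ⟪u, e i⟫_ℝ * ⟪u, e i⟫_ℝ * B a a + ⟪u, e i⟫_ℝ * ⟪w, e i⟫_ℝ * (B a c + B c a)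
        + ⟪w, e i⟫_ℝ * ⟪w, e i⟫_ℝ * B c c := by
    simp only [hA, map_add, map_smul, add_apply, smul_apply, smul_eq_mul]
    ring
  simp only [expand, Finset.sum_add_distrib, ← Finset.sum_mul, parseval, huw,
    real_inner_self_eq_norm_sq, hu, hw]
  ring

theorem E2.inner_eq (u v : E2) : ⟪u, v⟫_ℝ = u 0 * v 0 + u 1 * v 1 := by
  simp [PiLp.inner_apply, Fin.sum_univ_two, mul_comm]

theorem projLine_apply (x v : E2) : projLine x v = ⟪xhat x, v⟫_ℝ • xhat x := by
  simp only [projLine, xhat, smul_apply, ContinuousLinearMap.smulRight_apply,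
    innerSL_apply_apply, real_inner_smul_left, smul_smul]
  congr 1
  ring

theorem xhatPerp_apply_zero (x : E2) : xhatPerp x 0 = -xhat x 1 := by
  simp [xhatPerp]

theorem xhatPerp_apply_one (x : E2) : xhatPerp x 1 = xhat x 0 := by
  simp [xhatPerp]

theorem norm_xhat {x : E2} (hx : x ≠ 0) : ‖xhat x‖ = 1 :=
  norm_smul_inv_norm hx

theorem xhat_zero_sq_add_xhat_one_sq {x : E2} (hx : x ≠ 0) : xhat x 0 ^ 2 + xhat x 1 ^ 2 = 1 := by
  have h := real_inner_self_eq_norm_sq (xhat x)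
  rw [norm_xhat hx, E2.inner_eq] at h
  linear_combination h

theorem norm_xhatPerp {x : E2} (hx : x ≠ 0) : ‖xhatPerp x‖ = 1 := by
  have h : ⟪xhatPerp x, xhatPerp x⟫_ℝ = 1 := by
    rw [E2.inner_eq, xhatPerp_apply_zero, xhatPerp_apply_one]
    linear_combination xhat_zero_sq_add_xhat_one_sq hx
  rwa [real_inner_self_eq_norm_sq, pow_eq_one_iff_of_nonneg (norm_nonneg _) two_ne_zero] at h

theorem inner_xhat_xhatPerp (x : E2) : ⟪xhat x, xhatPerp x⟫_ℝ = 0 := by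
  rw [E2.inner_eq, xhatPerp_apply_zero, xhatPerp_apply_one]
  ring

theorem sub_projLine_apply {x : E2} (hx : x ≠ 0) (v : E2) :
    v - projLine x v = ⟪xhatPerp x, v⟫_ℝ • xhatPerp x := by
  ext i
  fin_cases i <;>
  · simp only [Fin.zero_eta, Fin.mk_one, projLine_apply, PiLp.sub_apply, PiLp.smul_apply,
      smul_eq_mul, E2.inner_eq, xhatPerp_apply_zero, xhatPerp_apply_one]
    linear_combination (-v _) * xhat_zero_sq_add_xhat_one_sq hx

theorem sum_bilin_radial_tangential {x : E2} (hx : x ≠ 0) (lam lamPerp : ℝ)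
    (B : E2 →L[ℝ] E2 →L[ℝ] ℝ) :
    let J := lam • projLine x + lamPerp • (ContinuousLinearMap.id ℝ E2 - projLine x)
    ∑ i : Fin 2, B (J (EuclideanSpace.single i 1)) (J (EuclideanSpace.single i 1))
      = lam ^ 2 * B (xhat x) (xhat x) + lamPerp ^ 2 * B (xhatPerp x) (xhatPerp x) := by
  intro J
  have hJ (v : E2) :
      J v = ⟪xhat x, v⟫_ℝ • (lam • xhat x) + ⟪xhatPerp x, v⟫_ℝ • (lamPerp • xhatPerp x) := by
    simp only [J, add_apply, smul_apply, sub_apply, ContinuousLinearMap.id_apply,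
      sub_projLine_apply hx]
    rw [projLine_apply, smul_comm lam, smul_comm lamPerp]
  simp only [← EuclideanSpace.basisFun_apply,
    (EuclideanSpace.basisFun (Fin 2) ℝ).sum_bilin_apply_self_of_orthonormal_pair B (norm_xhat hx)
      (norm_xhatPerp hx) (inner_xhat_xhatPerp x) hJ, map_smul, smul_apply, smul_eq_mul]
  ring

/-- Chain rule identity: if the spatial Jacobian of `H` at `(t,x)` is
`λ P_x + λ⊥ (I − P_x)` and `H` satisfies `∂_t H = ½ Δ_x H + (D_x H) b`, then for every
`C²` function `G`, the quantity `½ Δ_x (G∘H) + b·∇_x(G∘H) − ∂_t(G∘H)` at `(t,x)` equals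
`½ [λ² ⟨x̂, Hess G x̂⟩ + (λ⊥)² ⟨x̂⊥, Hess G x̂⊥⟩]` evaluated at `z = H(t,x)`. -/
theorem chain_rule_radial_tangential
    (x : E2) (hx : x ≠ 0) (t : ℝ) (b : E2) (lam lamPerp : ℝ)
    (H : ℝ → E2 → E2) (G : E2 → ℝ)
    (hH : ContDiffAt ℝ 2 (fun p : ℝ × E2 => H p.1 p.2) (t, x))
    (hG : ContDiff ℝ 2 G)
    (hJac : fderiv ℝ (H t) x
      = lam • projLine x + lamPerp • (ContinuousLinearMap.id ℝ E2 - projLine x))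
    (hPDE : deriv (fun s : ℝ => H s x) t
      = (1 / 2 : ℝ) • lap (H t) x + fderiv ℝ (H t) x b) :
    (1 / 2 : ℝ) * lap (fun y : E2 => G (H t y)) x
        + fderiv ℝ (fun y : E2 => G (H t y)) x b
        - deriv (fun s : ℝ => G (H s x)) t
      = (1 / 2 : ℝ) * (lam ^ 2 * hessQuad G (H t x) (xhat x)
          + lamPerp ^ 2 * hessQuad G (H t x) (xhatPerp x)) := by
  have hHx : ContDiffAt ℝ 2 (H t) x := hH.comp x (contDiffAt_const.prodMk contDiffAt_id)
  have hHt : DifferentiableAt ℝ (fun s => H s x) t :=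
    (hH.comp t (contDiffAt_id.prodMk contDiffAt_const)).differentiableAt two_ne_zero
  have hGH : ContDiffAt ℝ 2 G (H t x) := hG.contDiffAt
  have hGd : DifferentiableAt ℝ G (H t x) := hGH.differentiableAt two_ne_zero
  change (1 / 2 : ℝ) * lap (G ∘ H t) x + fderiv ℝ (G ∘ H t) x b
    - deriv (G ∘ fun s => H s x) t = _
  rw [lap_comp hGH hHx, fderiv_comp x hGd (hHx.differentiableAt two_ne_zero),
    fderiv_comp_deriv t hGd hHt, hPDE, hJac, sum_bilin_radial_tangential hx]
  simp only [hessQuad, fderiv_fderiv_apply_const hGH.differentiableAt_fderiv,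
    ContinuousLinearMap.comp_apply, map_add, map_smul, smul_eq_mul]
  ring
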